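/- arXiv:1408.5783 — 3 statements merged into one kernel-verified Lean document; each statement's English description precedes it below -/
import Mathlib

section
/- If all the level counts N_i of H are equal to the same number N for every cardinality i occurring in a P-free family A ⊆ 2^[n], then the Lubell function satisfies Σ_{A∈A} 1/C(n,|A|) ≤ α(H,P)/N. -/
/-- A family `𝒜 ⊆ 2^[n]` contains the poset `P` as a weak subposet. -/
def containsWeak {n : ℕ} (𝒜 : Finset (Finset (Fin n))) (P : Type*) [PartialOrder P] : Prop :=
  ∃ φ : P → Finset (Fin n), Function.Injective φ ∧ (∀ x, φ x ∈ 𝒜) ∧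
    ∀ x y : P, x ≤ y → φ x ⊆ φ y

/-!
Average over the permutations `σ` of `[n]`. For each `σ`, the sets `A ∈ 𝒜` with `σ • A ∈ H` are
carried by `σ` onto a `P`-free subfamily of `H`, so there are at most `α` of them. Conversely, each
of the `N` sets of `H` of size `k = |A|` is hit by exactly `n! / C(n,k)` permutations, so a fixed
`A ∈ 𝒜` is sent into `H` by `N n! / C(n,k)` of them. Summing over `σ` in both orders gives
`N n! Σ_{A ∈ 𝒜} 1 / C(n,|A|) ≤ n! α`.
-/

open Finset MulAction
open scoped Nat Pointwise

section
variable {G β : Type*} [Group G] [Fintype G] [MulAction G β] [DecidableEq β]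

lemma card_filter_smul_eq_smul (τ : G) (b : β) :
    #{g : G | g • b = τ • b} = #{g : G | g • b = b} :=
  card_nbij' (τ⁻¹ * ·) (τ * ·) (fun g hg => by simp_all [mul_smul])
    (fun g hg => by simp_all [mul_smul]) (fun g _ => by simp) (fun g _ => by simp)

end

section
variable {α : Type*} [DecidableEq α]

lemma exists_perm_smul_eq {A S : Finset α} (h : #A = #S) : ∃ τ : Equiv.Perm α, τ • A = S := by
  have := Set.powersetCard.isPretransitive (α := α) (n := #A)
  obtain ⟨τ, hτ⟩ := exists_smul_eq (Equiv.Perm α)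
    (⟨A, rfl⟩ : Set.powersetCard α #A) ⟨S, h.symm⟩
  exact ⟨τ, congrArg Subtype.val hτ⟩

variable [Fintype α]

lemma card_filter_perm_smul_eq_mul_choose {A S : Finset α} (h : #A = #S) :
    #{σ : Equiv.Perm α | σ • A = S} * (Fintype.card α).choose #A = (Fintype.card α)! := by
  obtain ⟨τ, rfl⟩ := exists_perm_smul_eq h
  have hfibre (S : Finset α) (hS : S ∈ powersetCard #A univ) :
      #{σ : Equiv.Perm α | σ • A = S} = #{σ : Equiv.Perm α | σ • A = A} := by
    obtain ⟨τ, rfl⟩ := exists_perm_smul_eq (mem_powersetCard_univ.1 hS).symm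
    exact card_filter_smul_eq_smul τ A
  have hperm : #(univ : Finset (Equiv.Perm α))
      = ∑ S ∈ powersetCard #A univ, #{σ : Equiv.Perm α | σ • A = S} :=
    card_eq_sum_card_fiberwise fun σ _ => by simp
  rw [sum_congr rfl hfibre, sum_const, card_powersetCard, Finset.card_univ, Finset.card_univ,
    Fintype.card_perm, smul_eq_mul] at hperm
  rw [card_filter_smul_eq_smul, hperm, mul_comm]

lemma card_filter_perm_smul_mem_mul_choose (H : Finset (Finset α)) (A : Finset α) :
    #{σ : Equiv.Perm α | σ • A ∈ H} * (Fintype.card α).choose #A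
      = (Fintype.card α)! * #{S ∈ H | #S = #A} := by
  have hfibres : #{σ : Equiv.Perm α | σ • A ∈ H}
      = ∑ S ∈ H with #S = #A, #{σ : Equiv.Perm α | σ • A = S} := by
    rw [card_eq_sum_card_fiberwise (f := (· • A)) (t := {S ∈ H | #S = #A})
      fun σ hσ => by simp_all]
    refine sum_congr rfl fun S hS => ?_
    congr 1
    ext σ
    simp_all
  rw [hfibres, sum_mul, sum_congr rfl fun S hS =>
    card_filter_perm_smul_eq_mul_choose (mem_filter.1 hS).2.symm, sum_const, smul_eq_mul, mul_comm]

end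

section
variable {n : ℕ} {𝒜 𝒮 : Finset (Finset (Fin n))} {P : Type*} [PartialOrder P]

lemma containsWeak.mono (h : 𝒮 ⊆ 𝒜) : containsWeak 𝒮 P → containsWeak 𝒜 P :=
  fun ⟨f, hinj, hmem, hmono⟩ => ⟨f, hinj, fun x => h (hmem x), hmono⟩

lemma containsWeak.of_image_smul (σ : Equiv.Perm (Fin n))
    (h : containsWeak (𝒜.image (σ • ·)) P) : containsWeak 𝒜 P := by
  obtain ⟨f, hinj, hmem, hmono⟩ := h
  refine ⟨fun x => σ⁻¹ • f x, (MulAction.injective σ⁻¹).comp hinj, fun x => ?_,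
    fun x y hxy => smul_finset_subset_smul_finset (hmono x y hxy)⟩
  obtain ⟨A, hA, hf⟩ := mem_image.1 (hmem x)
  simpa [← hf] using hA

end

theorem lubell_bound_uniform_levels_general (n : ℕ) (P : Type*) [PartialOrder P]
    (H : Finset (Finset (Fin n))) (N α : ℕ) (hN : 0 < N)
    (hα : ∀ 𝒮 ⊆ H, ¬ containsWeak 𝒮 P → 𝒮.card ≤ α)
    (𝒜 : Finset (Finset (Fin n))) (h𝒜 : ¬ containsWeak 𝒜 P)
    (hlevels : ∀ A ∈ 𝒜, (H.filter (fun S => S.card = A.card)).card = N) :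
    ∑ A ∈ 𝒜, (1 : ℝ) / (n.choose A.card) ≤ (α : ℝ) / N := by
  have hfree (σ : Equiv.Perm (Fin n)) : #{A ∈ 𝒜 | σ • A ∈ H} ≤ α := by
    rw [← card_image_of_injective _ (MulAction.injective σ)]
    refine hα _ (fun S hS => ?_) fun h => h𝒜 ?_
    · obtain ⟨A, hA, rfl⟩ := mem_image.1 hS
      exact (mem_filter.1 hA).2
    · exact (h.mono (image_subset_image (filter_subset _ _))).of_image_smul σ
  have hcount (A : Finset (Fin n)) (hA : A ∈ 𝒜) :
      (#{σ : Equiv.Perm (Fin n) | σ • A ∈ H} : ℝ) = n ! * N / n.choose #A := by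
    have hchoose : (n.choose #A : ℝ) ≠ 0 := by
      exact_mod_cast (Nat.choose_pos (by simpa using card_le_univ A)).ne'
    have := card_filter_perm_smul_mem_mul_choose H A
    rw [Fintype.card_fin, hlevels A hA] at this
    rw [eq_div_iff hchoose]
    exact_mod_cast this
  calc ∑ A ∈ 𝒜, (1 : ℝ) / n.choose #A
      = (∑ A ∈ 𝒜, (#{σ : Equiv.Perm (Fin n) | σ • A ∈ H} : ℝ)) / (n ! * N) := by
        rw [sum_div]
        refine sum_congr rfl fun A hA => ?_
        rw [hcount A hA]
        field_simp
    _ = (∑ σ : Equiv.Perm (Fin n), (#{A ∈ 𝒜 | σ • A ∈ H} : ℝ)) / (n ! * N) := by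
        congr 1
        exact_mod_cast (sum_card_bipartiteAbove_eq_sum_card_bipartiteBelow _).symm
    _ ≤ (∑ _σ : Equiv.Perm (Fin n), (α : ℝ)) / (n ! * N) := by
        gcongr with σ
        exact_mod_cast hfree σ
    _ = α / N := by
        rw [sum_const, card_univ, Fintype.card_perm, Fintype.card_fin, nsmul_eq_mul]
        field_simp

/-- If the family `H` has the same number `N` of sets of cardinality `i` for every
cardinality `i` occurring in the `P`-free family `𝒜`, and `α` bounds the size of every
`P`-free subfamily of `H` (in particular `α = α(H,P)`), then the Lubell function of `𝒜`
satisfies `Σ_{A∈𝒜} 1/C(n,|A|) ≤ α/N`. -/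
theorem lubell_bound_uniform_levels (n : ℕ) (P : Type*) [PartialOrder P] [Fintype P]
    (H : Finset (Finset (Fin n))) (N α : ℕ) (hN : 0 < N)
    (hα : ∀ 𝒮 ⊆ H, ¬ containsWeak 𝒮 P → 𝒮.card ≤ α)
    (𝒜 : Finset (Finset (Fin n))) (h𝒜 : ¬ containsWeak 𝒜 P)
    (hlevels : ∀ A ∈ 𝒜, (H.filter (fun S => S.card = A.card)).card = N) :
    ∑ A ∈ 𝒜, (1 : ℝ) / (n.choose A.card) ≤ (α : ℝ) / N :=
  lubell_bound_uniform_levels_general n P H N α hN hα 𝒜 h𝒜 hlevels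
end

section
/- Fix k ≥ 2 and suppose 3k−3 ≤ m ≤ n−k+1. The number of sets in the k-interval chain C_k^0 of cardinality at most m−1 that are incomparable (under inclusion) to at least one set in C_k^0 of cardinality at least m equals (3k−5)·2^{k−2}. -/
/-- The initial segment `{1,…,i}` of `[n]`, as a subset of `Fin n`. -/
def initSeg (n i : ℕ) : Finset (Fin n) := Finset.univ.filter (fun x => (x : ℕ) < i)

/-- The `k`-interval chain `C_k^0 = ⋃_{i=0}^{n-k} [[i],[i+k]]`. -/
def intervalChain (n k : ℕ) : Finset (Finset (Fin n)) :=
  (Finset.range (n - k + 1)).biUnion (fun i => Finset.Icc (initSeg n i) (initSeg n (i + k)))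

/-!
Transport the problem to `Finset ℕ` along `Fin.val`. A set `A` with `#A < m` is incomparable to
some member of the chain of size `≥ m` iff it has an element `a` with `m < a + k`: such a
member must omit an element `a` of `A` while containing `[0, i)` with `i ≤ a`, and conversely
`[0, i + k) \ {a}` works.

Write `k = N + 1` and `m = b + 2N`. Every member of the chain is uniquely `[0, u) ∪ (u + 1 + X)`
with `u` its least non-element and `X ⊆ [0, N)`. Those with `b ≤ u` and size `< m` are counted by
`∑_X (2N - #X) = 3N·2^(N-1)`. Among them, the ones without an element `≥ b + N` form the interval
`[[0, b), [0, b + N)]` of size `2^N`, while every member with such an element has `b ≤ u`.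
Hence the count is `3N·2^(N-1) - 2^N = (3k-5)·2^(k-2)`.
-/

open Finset

def natIntervalChain (n k : ℕ) : Finset (Finset ℕ) :=
  (range (n - k + 1)).biUnion fun i => Icc (range i) (range (i + k))

lemma mem_natIntervalChain {n k : ℕ} {A : Finset ℕ} :
    A ∈ natIntervalChain n k ↔ ∃ i ≤ n - k, range i ⊆ A ∧ A ⊆ range (i + k) := by
  simp [natIntervalChain]

lemma mem_intervalChain {n k : ℕ} {A : Finset (Fin n)} :
    A ∈ intervalChain n k ↔ ∃ i ≤ n - k, initSeg n i ⊆ A ∧ A ⊆ initSeg n (i + k) := by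
  simp [intervalChain]

lemma map_initSeg {n i : ℕ} (h : i ≤ n) : (initSeg n i).map Fin.valEmbedding = range i := by
  ext x
  simp only [initSeg, mem_map, mem_filter, mem_univ, true_and, Fin.valEmbedding_apply, mem_range]
  exact ⟨fun ⟨y, hy, hyx⟩ => hyx ▸ hy, fun hx => ⟨⟨x, by omega⟩, hx, rfl⟩⟩

lemma map_intervalChain {n k : ℕ} (hkn : k ≤ n) :
    (intervalChain n k).map (mapEmbedding Fin.valEmbedding).toEmbedding = natIntervalChain n k := by
  have key : ∀ A : Finset (Fin n),
      A ∈ intervalChain n k ↔ A.map Fin.valEmbedding ∈ natIntervalChain n k := by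
    intro A
    rw [mem_intervalChain, mem_natIntervalChain]
    refine exists_congr fun i => and_congr_right fun hi => ?_
    rw [← map_initSeg (by omega : i ≤ n), ← map_initSeg (by omega : i + k ≤ n),
      map_subset_map, map_subset_map]
  ext B
  simp only [mem_map, RelEmbedding.coe_toEmbedding, mapEmbedding_apply, key]
  refine ⟨fun ⟨A, hA, hAB⟩ => hAB ▸ hA, fun hB => ?_⟩
  obtain ⟨i, hi, -, hBi⟩ := mem_natIntervalChain.1 hB
  have hBn : B ⊆ (univ : Finset (Fin n)).map Fin.valEmbedding := by
    rw [Fin.map_valEmbedding_univ]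
    exact hBi.trans fun x hx => by simp at hx ⊢; omega
  obtain ⟨A, -, rfl⟩ := subset_map_iff.1 hBn
  exact ⟨A, hB, rfl⟩

lemma exists_incomparable_natIntervalChain_iff {n k m : ℕ} (hk : 2 ≤ k) (hmn : m + k ≤ n + 1)
    {A : Finset ℕ} (hAn : A ⊆ range n) (hAm : #A < m) :
    (∃ B ∈ natIntervalChain n k, m ≤ #B ∧ ¬A ⊆ B ∧ ¬B ⊆ A) ↔ ∃ a ∈ A, m < a + k := by
  constructor
  · rintro ⟨B, hB, hmB, hAB, -⟩
    obtain ⟨i, -, hiB, hBi⟩ := mem_natIntervalChain.1 hB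
    obtain ⟨a, haA, haB⟩ := not_subset.1 hAB
    have hia : i ≤ a := not_lt.1 fun h => haB (hiB (mem_range.2 h))
    have hsub : insert a B ⊆ range (a + k) := insert_subset (mem_range.2 (by omega))
      fun x hx => mem_range.2 (by have := mem_range.1 (hBi hx); omega)
    have := card_le_card hsub
    rw [card_insert_of_notMem haB, card_range] at this
    exact ⟨a, haA, by omega⟩
  · rintro ⟨a, haA, hma⟩
    have han := mem_range.1 (hAn haA)
    set i := min a (n - k)
    have hai : a < i + k := by omega
    refine ⟨(range (i + k)).erase a, mem_natIntervalChain.2 ⟨i, by omega, ?_, erase_subset _ _⟩,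
      ?_, fun h => notMem_erase a _ (h haA), fun h => ?_⟩
    · exact fun x hx => mem_erase.2 ⟨by have := mem_range.1 hx; omega,
        mem_range.2 (by have := mem_range.1 hx; omega)⟩
    · rw [card_erase_of_mem (mem_range.2 hai), card_range]; omega
    · have := card_le_card h
      rw [card_erase_of_mem (mem_range.2 hai), card_range] at this
      omega

lemma two_mul_sum_card_powerset {α : Type*} (s : Finset α) :
    2 * ∑ X ∈ s.powerset, #X = #s * 2 ^ #s := by
  have h := sum_powerset_apply_card (fun c : ℕ => c) (x := s)
  simp only [smul_eq_mul, mul_comm (Nat.choose _ _), Nat.sum_range_mul_choose] at h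
  rw [h]
  rcases Nat.eq_zero_or_pos #s with h | h
  · simp [h]
  · rw [mul_left_comm, mul_pow_sub_one h.ne']

lemma two_mul_sum_powerset_sub_card {α : Type*} (s : Finset α) :
    2 * ∑ X ∈ s.powerset, (2 * #s - #X) = 3 * #s * 2 ^ #s := by
  have hsum : ∑ X ∈ s.powerset, (2 * #s - #X) + ∑ X ∈ s.powerset, #X = 2 ^ #s * (2 * #s) := by
    rw [← sum_add_distrib, ← card_powerset, ← smul_eq_mul (a := #s.powerset), ← sum_const]
    refine sum_congr rfl fun X hX => ?_
    have := card_le_card (mem_powerset.1 hX)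
    omega
  have := two_mul_sum_card_powerset s
  nlinarith

def gapSet (u : ℕ) (X : Finset ℕ) : Finset ℕ := range u ∪ X.image (u + 1 + ·)

lemma mem_gapSet {u y : ℕ} {X : Finset ℕ} : y ∈ gapSet u X ↔ y < u ∨ ∃ x ∈ X, u + 1 + x = y := by
  simp [gapSet]

lemma card_gapSet (u : ℕ) (X : Finset ℕ) : #(gapSet u X) = u + #X := by
  rw [gapSet, card_union_of_disjoint, card_range, card_image_of_injective _ (add_right_injective _)]
  rw [disjoint_left]
  intro y hy hy'
  obtain ⟨x, -, rfl⟩ := mem_image.1 hy'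
  rw [mem_range] at hy
  omega

lemma range_subset_gapSet_iff {b u : ℕ} {X : Finset ℕ} : range b ⊆ gapSet u X ↔ b ≤ u := by
  refine ⟨fun h => not_lt.1 fun hub => ?_,
    fun h => (range_subset_range.2 h).trans subset_union_left⟩
  rcases mem_gapSet.1 (h (mem_range.2 hub)) with h | ⟨x, -, hx⟩ <;> omega

lemma gapSet_injective {u v : ℕ} {X Y : Finset ℕ} (h : gapSet u X = gapSet v Y) :
    u = v ∧ X = Y := by
  have huv : u = v := le_antisymm (range_subset_gapSet_iff.1 (h ▸ range_subset_gapSet_iff.2 le_rfl))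
    (range_subset_gapSet_iff.1 (h.symm ▸ range_subset_gapSet_iff.2 le_rfl))
  subst huv
  have key : ∀ (Z : Finset ℕ) (x : ℕ), x ∈ Z ↔ u + 1 + x ∈ gapSet u Z := by
    intro Z x
    simp [mem_gapSet, show ¬u + 1 + x < u by omega]
  refine ⟨rfl, ext fun x => ?_⟩
  rw [key X, key Y, h]

lemma gapSet_mem_natIntervalChain {n N u : ℕ} {X : Finset ℕ} (hX : X ⊆ range N)
    (hun : u + N + 1 ≤ n) : gapSet u X ∈ natIntervalChain n (N + 1) := by
  refine mem_natIntervalChain.2 ⟨u, by omega, subset_union_left, union_subset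
    (range_subset_range.2 (by omega)) (image_subset_iff.2 fun x hx => ?_)⟩
  have := mem_range.1 (hX hx)
  exact mem_range.2 (by omega)

lemma exists_eq_gapSet {n N : ℕ} {A : Finset ℕ} (hA : A ∈ natIntervalChain n (N + 1)) :
    ∃ u X, X ⊆ range N ∧ A = gapSet u X := by
  obtain ⟨i, -, hiA, hAi⟩ := mem_natIntervalChain.1 hA
  have hex : ∃ u, u ∉ A := Infinite.exists_notMem_finset A
  set u := Nat.find hex
  have hu : u ∉ A := Nat.find_spec hex
  have hiu : i ≤ u := not_lt.1 fun h => hu (hiA (mem_range.2 h))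
  refine ⟨u, A.preimage (u + 1 + ·) (add_right_injective _).injOn, fun x hx => ?_, ext fun y => ?_⟩
  · have := mem_range.1 (hAi (mem_preimage.1 hx))
    exact mem_range.2 (by omega)
  · simp only [mem_gapSet, mem_preimage]
    constructor
    · intro hy
      rcases lt_trichotomy y u with h | rfl | h
      · exact Or.inl h
      · exact absurd hy hu
      · exact Or.inr ⟨y - (u + 1), by rwa [show u + 1 + (y - (u + 1)) = y by omega], by omega⟩
    · rintro (h | ⟨x, hx, rfl⟩)
      · exact not_not.1 (Nat.find_min hex h)
      · exact hx

lemma filter_natIntervalChain_eq_image {n N b : ℕ} (hn : b + 3 * N ≤ n) :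
    {A ∈ natIntervalChain n (N + 1) | range b ⊆ A ∧ #A < b + 2 * N} =
      ((range N).powerset.sigma fun X => Ico b (b + 2 * N - #X)).image fun p => gapSet p.2 p.1 := by
  ext A
  simp only [mem_filter, mem_image, mem_sigma, mem_powerset, mem_Ico, Sigma.exists]
  constructor
  · rintro ⟨hA, hbA, hAb⟩
    obtain ⟨u, X, hX, rfl⟩ := exists_eq_gapSet hA
    rw [range_subset_gapSet_iff] at hbA
    rw [card_gapSet] at hAb
    exact ⟨X, u, ⟨hX, hbA, by omega⟩, rfl⟩
  · rintro ⟨X, u, ⟨hX, hbu, hu⟩, rfl⟩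
    exact ⟨gapSet_mem_natIntervalChain hX (by omega), range_subset_gapSet_iff.2 hbu,
      by rw [card_gapSet]; omega⟩

lemma two_mul_card_filter_natIntervalChain {n N b : ℕ} (hn : b + 3 * N ≤ n) :
    2 * #{A ∈ natIntervalChain n (N + 1) | range b ⊆ A ∧ #A < b + 2 * N} = 3 * N * 2 ^ N := by
  rw [filter_natIntervalChain_eq_image hn, card_image_of_injOn, card_sigma]
  · have hterm : ∀ X ∈ (range N).powerset, #(Ico b (b + 2 * N - #X)) = 2 * #(range N) - #X := by
      intro X _
      rw [Nat.card_Ico, card_range]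
      omega
    rw [sum_congr rfl hterm, two_mul_sum_powerset_sub_card, card_range]
  · rintro ⟨X, u⟩ - ⟨Y, v⟩ - h
    obtain ⟨rfl, rfl⟩ := gapSet_injective h
    rfl

lemma range_subset_of_mem_natIntervalChain {n k a : ℕ} {A : Finset ℕ}
    (hA : A ∈ natIntervalChain n k) (ha : a ∈ A) : range (a + 1 - k) ⊆ A := by
  obtain ⟨i, -, hiA, hAi⟩ := mem_natIntervalChain.1 hA
  have := mem_range.1 (hAi ha)
  exact (range_subset_range.2 (by omega)).trans hiA

theorem card_filter_natIntervalChain {n k m : ℕ} (hk : 2 ≤ k) (hkm : 2 * k ≤ m + 2)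
    (hmn : m + k ≤ n + 1) :
    #{A ∈ natIntervalChain n k | #A < m ∧ ∃ a ∈ A, m < a + k} = (3 * k - 5) * 2 ^ (k - 2) := by
  obtain ⟨K, rfl⟩ : ∃ K, k = K + 2 := ⟨k - 2, by omega⟩
  obtain ⟨b, rfl⟩ : ∃ b, m = b + 2 * (K + 1) := ⟨m - 2 * (K + 1), by omega⟩
  set G := {A ∈ natIntervalChain n (K + 1 + 1) | range b ⊆ A ∧ #A < b + 2 * (K + 1)}
  have hG : 2 * #G = 3 * (K + 1) * 2 ^ (K + 1) := two_mul_card_filter_natIntervalChain (by omega)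
  have hhigh : {A ∈ G | ∃ a ∈ A, b + 2 * (K + 1) < a + (K + 2)} =
      {A ∈ natIntervalChain n (K + 2) |
        #A < b + 2 * (K + 1) ∧ ∃ a ∈ A, b + 2 * (K + 1) < a + (K + 2)} := by
    ext A
    simp only [G, mem_filter]
    constructor
    · rintro ⟨⟨hA, -, hAm⟩, ha⟩
      exact ⟨hA, hAm, ha⟩
    · rintro ⟨hA, hAm, a, haA, ha⟩
      exact ⟨⟨hA, (range_subset_range.2 (by omega)).trans
        (range_subset_of_mem_natIntervalChain hA haA), hAm⟩, a, haA, ha⟩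
  have hlow : {A ∈ G | ¬∃ a ∈ A, b + 2 * (K + 1) < a + (K + 2)} =
      Icc (range b) (range (b + K + 1)) := by
    ext A
    simp only [G, mem_filter, mem_Icc, not_exists, not_and, not_lt]
    constructor
    · rintro ⟨⟨-, hbA, -⟩, hA⟩
      exact ⟨hbA, fun a ha => mem_range.2 (by have := hA a ha; omega)⟩
    · rintro ⟨hbA, hAb⟩
      have := card_le_card hAb
      rw [card_range] at this
      have hAm : A ∈ natIntervalChain n (K + 2) :=
        mem_natIntervalChain.2 ⟨b, by omega, hbA, hAb.trans (range_subset_range.2 (by omega))⟩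
      refine ⟨⟨hAm, hbA, by omega⟩, fun a ha => ?_⟩
      have := mem_range.1 (hAb ha)
      omega
  have hsplit :=
    card_filter_add_card_filter_not (s := G) (fun A => ∃ a ∈ A, b + 2 * (K + 1) < a + (K + 2))
  rw [hhigh, hlow, card_Icc_finset (range_subset_range.2 (by omega)), card_range, card_range,
    show b + K + 1 - b = K + 1 by omega, pow_succ] at hsplit
  rw [pow_succ] at hG
  rw [show 3 * (K + 2) - 5 = 3 * K + 1 by omega, show K + 2 - 2 = K by omega]
  nlinarith

/-- For `3k-3 ≤ m ≤ n-k+1`, the number of sets in the `k`-interval chain of cardinality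
at most `m-1` that are incomparable to at least one set in the chain of cardinality at
least `m` equals `(3k-5)⬝2^{k-2}`. -/
theorem intervalChain_unrelated_count (n k m : ℕ) (hk : 2 ≤ k)
    (hm₁ : 3 * k - 3 ≤ m) (hm₂ : m ≤ n - k + 1) :
    ((intervalChain n k).filter (fun A => A.card ≤ m - 1 ∧
        ∃ B ∈ intervalChain n k, m ≤ B.card ∧ ¬ A ⊆ B ∧ ¬ B ⊆ A)).card
      = (3 * k - 5) * 2 ^ (k - 2) := by
  have hkn : k ≤ n := by omega
  have hmn : m + k ≤ n + 1 := by omega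
  rw [← card_filter_natIntervalChain hk (by omega) hmn, ← map_intervalChain hkn, filter_map,
    card_map]
  congr 1
  refine filter_congr fun A _ => ?_
  have hAn : A.map Fin.valEmbedding ⊆ range n := fun x hx => by
    obtain ⟨y, -, rfl⟩ := mem_map.1 hx
    exact mem_range.2 y.isLt
  simp only [Function.comp_apply, RelEmbedding.coe_toEmbedding, mapEmbedding_apply, card_map]
  rw [Nat.le_sub_one_iff_lt (by omega)]
  refine and_congr_right fun hAm => ?_
  rw [← exists_incomparable_natIntervalChain_iff hk hmn hAn (by rwa [card_map]),
    ← map_intervalChain hkn]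
  simp [map_subset_map]
end

section
/- Fix k ≥ 2 and 3k−3 ≤ m ≤ n−k. Suppose A ∈ C_k^0 is incomparable to some set of cardinality m in C_k^0 but comparable to every set of cardinality m+1 in C_k^0. Then there is exactly one set of cardinality m in C_k^0 incomparable to A, namely the set whose indicator vector is (m−k+1) ones, then a single 0, then (k−1) ones, then zeros. -/
/-- The set whose indicator vector is `(m-k+1)` ones, a single 0, `(k-1)` ones, then
zeros: ones precisely at (0-based) indices `≤ m-k` and in `[m-k+2, m]`. -/
def worstSet (n k m : ℕ) : Finset (Fin n) :=
  Finset.univ.filter (fun x => (x : ℕ) ≤ m - k ∨ (m - k + 2 ≤ (x : ℕ) ∧ (x : ℕ) ≤ m))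

lemma mem_initSeg {n i : ℕ} {x : Fin n} : x ∈ initSeg n i ↔ (x : ℕ) < i := by
  simp [initSeg]

lemma initSeg_mono {n : ℕ} {i j : ℕ} (h : i ≤ j) : initSeg n i ⊆ initSeg n j := by
  intro x hx
  rw [mem_initSeg] at *
  omega

lemma mem_intervalChain_iff {n k : ℕ} {S : Finset (Fin n)} :
    S ∈ intervalChain n k ↔ ∃ i ≤ n - k, initSeg n i ⊆ S ∧ S ⊆ initSeg n (i + k) := by
  simp [intervalChain, Finset.mem_biUnion, Finset.mem_Icc, Nat.lt_succ_iff,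
    Finset.le_iff_subset]

lemma card_initSeg {n i : ℕ} (h : i ≤ n) : (initSeg n i).card = i := by
  have he : initSeg n i = Finset.attachFin (Finset.range i)
      (fun m hm => lt_of_lt_of_le (Finset.mem_range.mp hm) h) := by
    ext x
    simp [mem_initSeg, Finset.mem_attachFin]
  rw [he, Finset.card_attachFin, Finset.card_range]

/-- Forward direction: any incomparable card-`m` set is the worst set. -/
lemma forward_unrelated (n k m : ℕ) (hk : 2 ≤ k)
    (hm₁ : 3 * k - 3 ≤ m) (hm₂ : m ≤ n - k)
    (A : Finset (Fin n))
    (hrel : ∀ B ∈ intervalChain n k, B.card = m + 1 → A ⊆ B ∨ B ⊆ A)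
    (B : Finset (Fin n)) (hB : B ∈ intervalChain n k) (hBcard : B.card = m)
    (h1 : ¬ A ⊆ B) (h2 : ¬ B ⊆ A) : B = worstSet n k m := by
  have hm3 : 3 ≤ m := by omega
  have hnk : m + k ≤ n := by omega
  have hkm : k ≤ m := by omega
  obtain ⟨i, hi, hiB, hBi⟩ := mem_intervalChain_iff.mp hB
  have hikn : i + k ≤ n := by omega
  have him : m ≤ i + k := by
    have := Finset.card_le_card hBi
    rwa [hBcard, card_initSeg hikn] at this
  have hin : i ≤ m := by
    have := Finset.card_le_card hiB
    rwa [hBcard, card_initSeg (by omega)] at this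
  set M : Finset (Fin n) := initSeg n (i + k) \ B with hM
  have hMcard : M.card = i + k - m := by
    rw [hM, Finset.card_sdiff_of_subset hBi, card_initSeg hikn, hBcard]
  -- key claim: for any z in M, A ⊆ insert z B
  have key : ∀ z ∈ M, A ⊆ insert z B := by
    intro z hz
    rw [hM, Finset.mem_sdiff] at hz
    have hmem : insert z B ∈ intervalChain n k := by
      rw [mem_intervalChain_iff]
      exact ⟨i, hi, hiB.trans (Finset.subset_insert _ _),
        Finset.insert_subset hz.1 hBi⟩
    have hcard : (insert z B).card = m + 1 := by
      rw [Finset.card_insert_of_notMem hz.2, hBcard]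
    rcases hrel _ hmem hcard with h | h
    · exact h
    · exact absurd ((Finset.subset_insert _ _).trans h) h2
  -- M has at most one element
  have hMle : M.card ≤ 1 := by
    by_contra hM2
    obtain ⟨a, ha, b, hb, hab⟩ := Finset.one_lt_card.mp (not_le.mp hM2)
    apply h1
    intro x hx
    have hxa := key a ha hx
    have hxb := key b hb hx
    rw [Finset.mem_insert] at hxa hxb
    rcases hxa with rfl | hxa
    · rcases hxb with rfl | hxb
      · exact absurd rfl hab
      · exact hxb
    · exact hxa
  have hik1 : i + k = m ∨ i + k = m + 1 := by omega
  have hmn : m + 1 < n := by omega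
  -- produce y and its properties
  obtain ⟨y, hyA, hyub, hylb, hBy, hAm1⟩ :
      ∃ y : Fin n, y ∈ A ∧ (y : ℕ) ≤ m ∧ m + 1 - k ≤ (y : ℕ) ∧
        B = initSeg n (m + 1) \ {y} ∧ A ⊆ initSeg n (m + 1) := by
    rcases hik1 with h | h
    · -- i + k = m : B = initSeg m, y = m
      have hMe : M = ∅ := Finset.card_eq_zero.mp (by omega)
      have hBeq : B = initSeg n (i + k) := by
        apply Finset.eq_of_subset_of_card_le hBi
        rw [hBcard, card_initSeg hikn, h]
      rw [h] at hBeq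
      -- A ⊆ initSeg (m+1) via hrel with initSeg (m+1)
      have hseg : initSeg n (m + 1) ∈ intervalChain n k := by
        rw [mem_intervalChain_iff]
        exact ⟨m + 1 - k, by omega, initSeg_mono (by omega), initSeg_mono (by omega)⟩
      have hsegc : (initSeg n (m + 1)).card = m + 1 := card_initSeg (by omega)
      have hAm1 : A ⊆ initSeg n (m + 1) := by
        rcases hrel _ hseg hsegc with h' | h'
        · exact h'
        · exact absurd (hBeq ▸ (initSeg_mono (by omega)).trans h') h2
      obtain ⟨x, hxA, hxB⟩ := Finset.not_subset.mp h1
      have hx1 : (x : ℕ) < m + 1 := mem_initSeg.mp (hAm1 hxA)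
      have hx2 : ¬ (x : ℕ) < m := fun hc => hxB (hBeq ▸ mem_initSeg.mpr hc)
      have hxm : (x : ℕ) = m := by omega
      refine ⟨x, hxA, by omega, by omega, ?_, hAm1⟩
      rw [hBeq]
      ext z
      simp only [mem_initSeg, Finset.mem_sdiff, Finset.mem_singleton, Fin.ext_iff, hxm]
      omega
    · -- i + k = m + 1 : M = {z}
      obtain ⟨z, hMz⟩ := Finset.card_eq_one.mp (by rw [hMcard, h]; omega)
      have hzM : z ∈ M := hMz ▸ Finset.mem_singleton_self z
      have hBeq : B = initSeg n (m + 1) \ {z} := by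
        have : initSeg n (i + k) \ M = B := Finset.sdiff_sdiff_eq_self hBi
        rw [← this, hMz, h]
      have hAz : A ⊆ insert z B := key z hzM
      have hzseg : (z : ℕ) < m + 1 := by
        have := (Finset.mem_sdiff.mp hzM).1
        rw [mem_initSeg, h] at this
        exact this
      have hzi : ¬ (z : ℕ) < i := by
        intro hc
        exact (Finset.mem_sdiff.mp hzM).2 (hiB (mem_initSeg.mpr hc))
      have hBsub : B ⊆ initSeg n (m + 1) := by
        rw [← h]; exact hBi
      have hAm1 : A ⊆ initSeg n (m + 1) := by
        intro x hx
        rcases Finset.mem_insert.mp (hAz hx) with rfl | hxB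
        · exact mem_initSeg.mpr hzseg
        · exact hBsub hxB
      have hzA : z ∈ A := by
        obtain ⟨x, hxA, hxB⟩ := Finset.not_subset.mp h1
        rcases Finset.mem_insert.mp (hAz hxA) with rfl | hxB'
        · exact hxA
        · exact absurd hxB' hxB
      exact ⟨z, hzA, by omega, by omega, hBeq, hAm1⟩
  -- now show (y : ℕ) = m + 1 - k
  have hyeq : (y : ℕ) = m + 1 - k := by
    by_contra hne
    have hy2 : m + 2 - k ≤ (y : ℕ) := by omega
    set D : Finset (Fin n) := initSeg n (m + 2) \ {y} with hD
    have hDmem : D ∈ intervalChain n k := by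
      rw [mem_intervalChain_iff]
      refine ⟨(y : ℕ), by omega, ?_, ?_⟩
      · intro x hx
        rw [mem_initSeg] at hx
        rw [hD, Finset.mem_sdiff, mem_initSeg, Finset.mem_singleton, Fin.ext_iff]
        omega
      · intro x hx
        rw [hD, Finset.mem_sdiff, mem_initSeg] at hx
        rw [mem_initSeg]
        omega
    have hDcard : D.card = m + 1 := by
      rw [hD, Finset.card_sdiff_of_subset (by
        intro x hx
        rw [Finset.mem_singleton] at hx
        rw [hx, mem_initSeg]
        omega), card_initSeg (by omega), Finset.card_singleton]
      omega
    rcases hrel _ hDmem hDcard with hc | hc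
    · have := hc hyA
      rw [hD, Finset.mem_sdiff, Finset.mem_singleton] at this
      exact this.2 rfl
    · have hwD : (⟨m + 1, by omega⟩ : Fin n) ∈ D := by
        simp only [hD, Finset.mem_sdiff, mem_initSeg, Finset.mem_singleton, Fin.ext_iff,
          Fin.val_mk]
        omega
      have := hAm1 (hc hwD)
      rw [mem_initSeg] at this
      simp at this
    -- end
  rw [hBy]
  ext x
  simp only [mem_initSeg, Finset.mem_sdiff, Finset.mem_singleton, Fin.ext_iff, hyeq,
    worstSet, Finset.mem_filter, Finset.mem_univ, true_and]
  omega

/-- If `A` in the `k`-interval chain is incomparable to some set of cardinality `m` of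
the chain but comparable to all its sets of cardinality `m+1`, then the unique set of
cardinality `m` in the chain incomparable to `A` is
`11…1 0 1…1 00…0` (with `m-k+1` initial ones and `k-1` ones after the unique 0). -/
theorem intervalChain_unique_unrelated (n k m : ℕ) (hk : 2 ≤ k)
    (hm₁ : 3 * k - 3 ≤ m) (hm₂ : m ≤ n - k)
    (A : Finset (Fin n)) (hA : A ∈ intervalChain n k)
    (hunrel : ∃ B ∈ intervalChain n k, B.card = m ∧ ¬ A ⊆ B ∧ ¬ B ⊆ A)
    (hrel : ∀ B ∈ intervalChain n k, B.card = m + 1 → A ⊆ B ∨ B ⊆ A) :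
    ∀ B ∈ intervalChain n k, B.card = m →
      ((¬ A ⊆ B ∧ ¬ B ⊆ A) ↔ B = worstSet n k m) := by
  intro B hB hBcard
  constructor
  · rintro ⟨h1, h2⟩
    exact forward_unrelated n k m hk hm₁ hm₂ A hrel B hB hBcard h1 h2
  · rintro rfl
    obtain ⟨B0, hB0, hB0card, h1, h2⟩ := hunrel
    have := forward_unrelated n k m hk hm₁ hm₂ A hrel B0 hB0 hB0card h1 h2
    rw [this] at h1 h2
    exact ⟨h1, h2⟩
end
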